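/- arXiv:2408.14200 — 2 statements merged into one kernel-verified Lean document; each statement's English description precedes it below -/
import Mathlib

section
/- Let n ≥ 1 be an integer. Then lim_{s→1⁻} c_{n,s} / (1−s) = 4 Γ(n/2 + 1) / π^{n/2}. In particular c_{n,s} → 0 as s → 1⁻, with c_{n,s} comparable to (1−s). -/
open MeasureTheory
noncomputable section

/-- Euclidean space ℝⁿ. -/
abbrev RR (n : ℕ) := EuclideanSpace ℝ (Fin n)

/-- The constant c_{n,s} = 4^s Γ(n/2+s) / (π^{n/2} |Γ(-s)|). -/
def cns (n : ℕ) (s : ℝ) : ℝ :=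
  (4 : ℝ) ^ s * Real.Gamma ((n : ℝ) / 2 + s) / (Real.pi ^ ((n : ℝ) / 2) * |Real.Gamma (-s)|)

lemma gamma_continuousAt {x : ℝ} (hx : 0 < x) : ContinuousAt Real.Gamma x := by
  refine (Real.differentiableAt_Gamma fun m => ?_).continuousAt
  intro h
  have : (0:ℝ) < -(m:ℝ) := h ▸ hx
  have : (0:ℝ) ≤ (m:ℝ) := Nat.cast_nonneg m
  linarith

/-- Asymptotic behaviour of the constant c_{n,s} as s → 1⁻:
c_{n,s}/(1-s) → 4 Γ(n/2+1)/π^{n/2}. -/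
theorem cns_div_one_sub_tendsto
    (n : ℕ) (hn : 1 ≤ n) :
    Filter.Tendsto (fun s : ℝ => cns n s / (1 - s))
      (nhdsWithin 1 (Set.Iio 1))
      (nhds (4 * Real.Gamma ((n : ℝ) / 2 + 1) / Real.pi ^ ((n : ℝ) / 2))) := by
  have hpi : (0:ℝ) < Real.pi ^ ((n : ℝ) / 2) := Real.rpow_pos_of_pos Real.pi_pos _
  set g : ℝ → ℝ := fun s =>
    (4 : ℝ) ^ s * Real.Gamma ((n : ℝ) / 2 + s) * s / (Real.pi ^ ((n : ℝ) / 2) * Real.Gamma (2 - s))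
  have heq : ∀ s ∈ Set.Ioo (0:ℝ) 1, cns n s / (1 - s) = g s := by
    intro s hs
    obtain ⟨hs0, hs1⟩ := hs
    have h1s : (1:ℝ) - s ≠ 0 := by linarith
    have hG2 : Real.Gamma (2 - s) = s * (1 - s) * (-Real.Gamma (-s)) := by
      have e1 : Real.Gamma (2 - s) = (1 - s) * Real.Gamma (1 - s) := by
        have := Real.Gamma_add_one (s := 1 - s) h1s
        rw [show (1:ℝ) - s + 1 = 2 - s by ring] at this
        exact this
      have e2 : Real.Gamma (1 - s) = (-s) * Real.Gamma (-s) := by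
        have := Real.Gamma_add_one (s := -s) (by linarith)
        rw [show -s + 1 = 1 - s by ring] at this
        exact this
      rw [e1, e2]; ring
    have hGpos : 0 < Real.Gamma (2 - s) := Real.Gamma_pos_of_pos (by linarith)
    have hneg : 0 < -Real.Gamma (-s) := by
      nlinarith [hGpos, mul_pos hs0 (by linarith : (0:ℝ) < 1 - s)]
    have habs : |Real.Gamma (-s)| = -Real.Gamma (-s) := abs_of_neg (by linarith)
    have hs' : s ≠ 0 := hs0.ne'
    have hG2' : Real.Gamma (2 - s) ≠ 0 := hGpos.ne'
    have habs2 : |Real.Gamma (-s)| = Real.Gamma (2 - s) / (s * (1 - s)) := by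
      rw [habs, hG2]
      field_simp
    simp only [cns, g, habs2]
    field_simp
  have hmem : ∀ᶠ s in nhdsWithin 1 (Set.Iio 1), s ∈ Set.Ioo (0:ℝ) 1 := by
    have h1 : ∀ᶠ s : ℝ in nhdsWithin 1 (Set.Iio 1), s ∈ Set.Ioi (0:ℝ) :=
      eventually_nhdsWithin_of_eventually_nhds
        (Filter.Tendsto.eventually_const_lt (by norm_num) Filter.tendsto_id)
    filter_upwards [h1, self_mem_nhdsWithin] with s h0 h1'
    exact ⟨h0, h1'⟩
  have hglim : Filter.Tendsto g (nhdsWithin 1 (Set.Iio 1))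
      (nhds (4 * Real.Gamma ((n : ℝ) / 2 + 1) / Real.pi ^ ((n : ℝ) / 2))) := by
    have hcont : ContinuousAt g 1 := by
      apply ContinuousAt.div
      · exact ((Real.continuousAt_const_rpow (by norm_num : (4:ℝ) ≠ 0)).mul
          ((gamma_continuousAt (x := (n:ℝ)/2 + 1) (by positivity)).comp
            (continuousAt_const.add continuousAt_id))).mul continuousAt_id
      · exact continuousAt_const.mul
          ((gamma_continuousAt (by norm_num)).comp (continuousAt_const.sub continuousAt_id))
      · have h21 : (2:ℝ) - 1 = 1 := by norm_num
        rw [h21, Real.Gamma_one, mul_one]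
        exact hpi.ne'
    have : g 1 = 4 * Real.Gamma ((n : ℝ) / 2 + 1) / Real.pi ^ ((n : ℝ) / 2) := by
      simp only [g]
      norm_num [Real.Gamma_one, Real.rpow_one]
    rw [← this]
    exact hcont.continuousWithinAt.tendsto
  exact hglim.congr' (by filter_upwards [hmem] with s hs using (heq s hs).symm)
end
end

section
/- (Higher order fractional Poincaré inequality.) Let n ≥ 1 be an integer, let K ⊂ ℝⁿ be a compact set, let s > 0 be a real number and let t ∈ [0, s]. Then there exists a constant C = C(n, s, K) > 0 such that for every smooth compactly supported function u : ℝⁿ → ℂ with support contained in K, ∫_{ℝⁿ} |ξ|^{2t} |𝓕u(ξ)|² dξ ≤ C ∫_{ℝⁿ} |ξ|^{2s} |𝓕u(ξ)|² dξ. (Equivalently, ‖(−Δ)^{t/2} u‖_{L²(ℝⁿ)} ≤ C^{1/2} ‖(−Δ)^{s/2} u‖_{L²(ℝⁿ)} for all u supported in K.) -/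
open MeasureTheory
noncomputable section

/-- The Fourier transform, normalized as (𝓕u)(ξ) = (2π)^{-n/2} ∫ e^{-i x·ξ} u(x) dx. -/
def FT (n : ℕ) (u : RR n → ℂ) (ξ : RR n) : ℂ :=
  (((2 * Real.pi) ^ (-(n : ℝ) / 2) : ℝ) : ℂ) *
    ∫ x : RR n, Complex.exp (-(Complex.I * ((inner ℝ x ξ : ℝ) : ℂ))) * u x

/-- The inverse Fourier transform, (𝓕⁻¹v)(x) = (2π)^{-n/2} ∫ e^{i ξ·x} v(ξ) dξ. -/
def IFT (n : ℕ) (v : RR n → ℂ) (x : RR n) : ℂ :=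
  (((2 * Real.pi) ^ (-(n : ℝ) / 2) : ℝ) : ℂ) *
    ∫ ξ : RR n, Complex.exp (Complex.I * ((inner ℝ ξ x : ℝ) : ℂ)) * v ξ


open FourierTransform Real Metric Complex
set_option maxHeartbeats 1600000


/-- Schwartz map from a smooth compactly supported function. -/
def toSchwartz (n : ℕ) (u : RR n → ℂ) (hu : ContDiff ℝ (⊤ : ℕ∞) u) (hsupp : HasCompactSupport u) :
    SchwartzMap (RR n) ℂ where
  toFun := u
  smooth' := hu.of_le (by simp)
  decay' := by
    intro k m
    have h1 : Continuous fun x : RR n => ‖x‖ ^ k * ‖iteratedFDeriv ℝ m u x‖ :=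
      (continuous_norm.pow k).mul ((hu.continuous_iteratedFDeriv (by exact_mod_cast le_top)).norm)
    have h2 : HasCompactSupport fun x : RR n => ‖x‖ ^ k * ‖iteratedFDeriv ℝ m u x‖ := by
      apply HasCompactSupport.mul_left
      exact (hsupp.iteratedFDeriv m).norm
    obtain ⟨C, hC⟩ := h2.exists_bound_of_continuous h1
    exact ⟨C, fun x => (le_abs_self _).trans ((Real.norm_eq_abs _) ▸ hC x)⟩

lemma toSchwartz_coe (n : ℕ) (u : RR n → ℂ) (hu : ContDiff ℝ (⊤ : ℕ∞) u)
    (hsupp : HasCompactSupport u) : ⇑(toSchwartz n u hu hsupp) = u := rfl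


lemma fourier_conj {n : ℕ} (h : RR n → ℂ) (x : RR n) :
    𝓕 (fun ξ => (starRingEnd ℂ) (h ξ)) x = (starRingEnd ℂ) (𝓕⁻ h x) := by
  rw [Real.fourier_eq', Real.fourierInv_eq', ← integral_conj]
  congr 1
  ext ξ
  rw [smul_eq_mul, smul_eq_mul, map_mul, ← Complex.exp_conj]
  congr 2
  simp only [map_mul, Complex.conj_I, Complex.conj_ofReal]
  push_cast
  ring

lemma innerL_flip {n : ℕ} : (innerₗ (RR n)).flip = innerₗ (RR n) := by
  apply LinearMap.ext; intro x; apply LinearMap.ext; intro y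
  simp only [LinearMap.flip_apply, innerₗ_apply_apply]
  exact real_inner_comm x y

lemma plancherel {n : ℕ} (u : RR n → ℂ) (hc : Continuous u) (hi : Integrable u)
    (hf : Integrable (𝓕 u)) :
    ∫ ξ : RR n, ‖𝓕 u ξ‖ ^ 2 = ∫ x : RR n, ‖u x‖ ^ 2 := by
  have hg : Integrable fun ξ : RR n => (starRingEnd ℂ) (𝓕 u ξ) := by
    apply hf.norm.mono ((Complex.isometry_conj.continuous.comp_aestronglyMeasurable hf.1))
    filter_upwards with ξ
    simp
  have key := VectorFourier.integral_fourierIntegral_smul_eq_flip (μ := (volume : Measure (RR n)))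
    (ν := (volume : Measure (RR n))) (L := innerₗ (RR n))
    (f := u) (g := fun ξ => (starRingEnd ℂ) (𝓕 u ξ))
    Real.continuous_fourierChar continuous_inner hi hg
  rw [innerL_flip] at key
  have h1 : ∀ ξ : RR n, (𝓕 u ξ) • (starRingEnd ℂ) (𝓕 u ξ) = ((‖𝓕 u ξ‖ ^ 2 : ℝ) : ℂ) := by
    intro ξ
    rw [smul_eq_mul, Complex.mul_conj, Complex.normSq_eq_norm_sq]
  have h2 : ∀ x : RR n, u x • (𝓕 (fun ξ => (starRingEnd ℂ) (𝓕 u ξ)) x) = ((‖u x‖ ^ 2 : ℝ) : ℂ) := by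
    intro x
    rw [fourier_conj, hi.fourierInv_fourier_eq hf hc.continuousAt, smul_eq_mul, Complex.mul_conj,
      Complex.normSq_eq_norm_sq]
  have lhs : ∫ ξ : RR n, (𝓕 u ξ) • (starRingEnd ℂ) (𝓕 u ξ) = ((∫ ξ : RR n, ‖𝓕 u ξ‖ ^ 2 : ℝ) : ℂ) := by
    simp_rw [h1]; exact integral_ofReal
  have rhs : ∫ x : RR n, u x • (𝓕 (fun ξ => (starRingEnd ℂ) (𝓕 u ξ)) x)
      = ((∫ x : RR n, ‖u x‖ ^ 2 : ℝ) : ℂ) := by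
    simp_rw [h2]; exact integral_ofReal
  have : ((∫ ξ : RR n, ‖𝓕 u ξ‖ ^ 2 : ℝ) : ℂ) = ((∫ x : RR n, ‖u x‖ ^ 2 : ℝ) : ℂ) := by
    rw [← lhs, ← rhs]; exact key
  exact_mod_cast this


lemma integrable_weight {n : ℕ} (g : SchwartzMap (RR n) ℂ) (r : ℝ) (hr : 0 ≤ r) :
    Integrable fun ξ : RR n => ‖ξ‖ ^ r * ‖g ξ‖ ^ 2 := by
  obtain ⟨B, -, hB⟩ := g.decay 0 0
  set B0 : ℝ := max B 0 with hB0
  have hgB : ∀ x : RR n, ‖g x‖ ≤ B0 := fun x => by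
    have := hB x
    simp only [pow_zero, one_mul, norm_iteratedFDeriv_zero] at this
    exact this.trans (le_max_left _ _)
  set m : ℕ := ⌈r⌉₊ with hm
  have hmaj : Integrable fun ξ : RR n => B0 * (‖g ξ‖ + ‖ξ‖ ^ m * ‖g ξ‖) :=
    (g.integrable.norm.add (g.integrable_pow_mul volume m)).const_mul B0
  apply hmaj.mono'
  · apply Continuous.aestronglyMeasurable
    exact (continuous_norm.rpow_const fun x => Or.inr hr).mul (g.continuous.norm.pow 2)
  · filter_upwards with ξ
    have h1 : (0:ℝ) ≤ ‖ξ‖ ^ r := rpow_nonneg (norm_nonneg _) r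
    have h2 : ‖ξ‖ ^ r ≤ 1 + ‖ξ‖ ^ m := by
      rcases le_or_gt ‖ξ‖ 1 with h | h
      · have := rpow_le_one (norm_nonneg _) h hr
        have h3 : (0:ℝ) ≤ ‖ξ‖ ^ m := pow_nonneg (norm_nonneg _) m
        linarith
      · have h4 : ‖ξ‖ ^ r ≤ ‖ξ‖ ^ (m : ℝ) :=
          rpow_le_rpow_of_exponent_le h.le (Nat.le_ceil r)
        rw [rpow_natCast] at h4
        linarith
    have h5 : ‖g ξ‖ ^ 2 ≤ B0 * ‖g ξ‖ := by
      rw [sq]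
      exact mul_le_mul_of_nonneg_right (hgB ξ) (norm_nonneg _)
    have h6 : (0:ℝ) ≤ ‖g ξ‖ ^ 2 := sq_nonneg _
    rw [Real.norm_eq_abs, _root_.abs_of_nonneg (mul_nonneg h1 h6)]
    calc ‖ξ‖ ^ r * ‖g ξ‖ ^ 2 ≤ (1 + ‖ξ‖ ^ m) * (B0 * ‖g ξ‖) := by
          apply mul_le_mul h2 h5 h6 (by positivity)
      _ = B0 * (‖g ξ‖ + ‖ξ‖ ^ m * ‖g ξ‖) := by ring

lemma coreNorm (n : ℕ) (hn : 1 ≤ n) (K : Set (RR n)) (hK : IsCompact K)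
    (s : ℝ) (hs : 0 < s) (t : ℝ) (ht0 : 0 ≤ t) (hts : t ≤ s) :
    ∃ C > (0:ℝ), ∀ u : RR n → ℂ, ContDiff ℝ (⊤ : ℕ∞) u → HasCompactSupport u → tsupport u ⊆ K →
      (∫ x : RR n, ‖u x‖ ^ 2) = 1 →
      ∫ ξ : RR n, ‖ξ‖ ^ (2*t) * ‖𝓕 u ξ‖ ^ 2
        ≤ C * ∫ ξ : RR n, ‖ξ‖ ^ (2*s) * ‖𝓕 u ξ‖ ^ 2 := by
  haveI : Nontrivial (RR n) := Module.nontrivial_of_finrank_pos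
    (by rw [finrank_euclideanSpace_fin]; omega)
  set μK : ℝ := (volume K).toReal with hμK
  set c₀ : ℝ := ((μK + 1)/2)^2 with hc₀def
  set V1 : ℝ := (volume (ball (0:RR n) 1)).toReal with hV1def
  have hμK0 : 0 ≤ μK := ENNReal.toReal_nonneg
  have hV1 : 0 ≤ V1 := ENNReal.toReal_nonneg
  have hc₀ : 0 ≤ c₀ := sq_nonneg _
  set ρ : ℝ := min 1 (1/(2 * ((V1+1)*(c₀+1)))) with hρdef
  have hρpos : 0 < ρ := lt_min one_pos (by positivity)
  have hρ1 : ρ ≤ 1 := min_le_left _ _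
  refine ⟨2 * ρ ^ (2*t - 2*s), by positivity, ?_⟩
  intro u hu hsupp hsub hnorm
  set U := toSchwartz n u hu hsupp with hU
  set g := FourierTransform.fourierCLE ℝ (SchwartzMap (RR n) ℂ) U with hg
  have hgc : ⇑g = 𝓕 u := rfl
  have hiu : Integrable u := hu.continuous.integrable_of_hasCompactSupport hsupp
  have hif : Integrable (𝓕 u) := hgc ▸ g.integrable
  have hI2 : Integrable (fun ξ : RR n => ‖𝓕 u ξ‖^2) := by
    have h := integrable_weight g 0 le_rfl
    rw [hgc] at h
    simpa using h
  have hIt : Integrable (fun ξ : RR n => ‖ξ‖^(2*t) * ‖𝓕 u ξ‖^2) := by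
    have h := integrable_weight g (2*t) (by positivity); rwa [hgc] at h
  have hIs : Integrable (fun ξ : RR n => ‖ξ‖^(2*s) * ‖𝓕 u ξ‖^2) := by
    have h := integrable_weight g (2*s) (by positivity); rwa [hgc] at h
  have hpl : ∫ ξ : RR n, ‖𝓕 u ξ‖^2 = 1 := by
    rw [plancherel u hu.continuous hiu hif, hnorm]
  -- L¹ bound
  have hInt2 : Integrable (fun x : RR n => ‖u x‖^2) :=
    ((hu.continuous.norm.pow 2)).integrable_of_hasCompactSupport
      (by have h := hsupp.comp_left (g := fun z : ℂ => ‖z‖^2) (by simp); exact h)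
  have hind : Integrable (K.indicator fun _ => (1:ℝ)) :=
    (integrableOn_const hK.measure_lt_top.ne).integrable_indicator hK.measurableSet
  have hL1 : ∫ x : RR n, ‖u x‖ ≤ (μK + 1)/2 := by
    have hpt : ∀ x : RR n, ‖u x‖ ≤ ((K.indicator (fun _ => (1:ℝ)) x) + ‖u x‖^2)/2 := by
      intro x
      by_cases hx : x ∈ K
      · rw [Set.indicator_of_mem hx]
        nlinarith [sq_nonneg (‖u x‖ - 1)]
      · have hx0 : u x = 0 := image_eq_zero_of_notMem_tsupport (fun hmem => hx (hsub hmem))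
        rw [Set.indicator_of_notMem hx, hx0]
        simp
    calc ∫ x : RR n, ‖u x‖
        ≤ ∫ x : RR n, ((K.indicator (fun _ => (1:ℝ)) x) + ‖u x‖^2)/2 :=
          integral_mono hiu.norm ((hind.add hInt2).div_const 2) hpt
      _ = ((∫ x : RR n, K.indicator (fun _ => (1:ℝ)) x) + ∫ x : RR n, ‖u x‖^2)/2 := by
          rw [integral_div, integral_add hind hInt2]
      _ = (μK + 1)/2 := by
          rw [hnorm, integral_indicator_const (1:ℝ) hK.measurableSet]
          simp [hμK, smul_eq_mul, Measure.real]
  have hsup : ∀ ξ : RR n, ‖𝓕 u ξ‖^2 ≤ c₀ := by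
    intro ξ
    have h1 : ‖𝓕 u ξ‖ ≤ ∫ x : RR n, ‖u x‖ :=
      VectorFourier.norm_fourierIntegral_le_integral_norm _ _ _ _ _
    calc ‖𝓕 u ξ‖^2 ≤ ((μK+1)/2)^2 := pow_le_pow_left₀ (norm_nonneg _) (h1.trans hL1) 2
      _ = c₀ := rfl
  set B := ball (0:RR n) ρ with hB
  have hBmeas : MeasurableSet B := measurableSet_ball
  have hvol : (volume B).toReal ≤ ρ * V1 := by
    rw [hB, Measure.addHaar_ball volume 0 hρpos.le, finrank_euclideanSpace_fin,
      ENNReal.toReal_mul, ENNReal.toReal_ofReal (by positivity)]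
    have h7 : ρ ^ n ≤ ρ := by
      calc ρ^n ≤ ρ^1 := pow_le_pow_of_le_one hρpos.le hρ1 hn
        _ = ρ := pow_one ρ
    exact mul_le_mul_of_nonneg_right h7 hV1
  have hBhalf : ∫ ξ in B, ‖𝓕 u ξ‖^2 ≤ 1/2 := by
    have hD : (0:ℝ) < (V1+1)*(c₀+1) := by positivity
    have h4 : ρ ≤ 1/(2 * ((V1+1)*(c₀+1))) := min_le_right _ _
    have h4' : ρ * (2 * ((V1+1)*(c₀+1))) ≤ 1 := by
      rw [← le_div_iff₀ (by positivity)]; exact h4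
    calc ∫ ξ in B, ‖𝓕 u ξ‖^2 ≤ ∫ _ξ in B, c₀ :=
          setIntegral_mono_on hI2.integrableOn
            (integrableOn_const measure_ball_lt_top.ne) hBmeas (fun ξ _ => hsup ξ)
      _ = (volume B).toReal * c₀ := by rw [setIntegral_const, smul_eq_mul]; rfl
      _ ≤ 1/2 := by nlinarith [mul_le_mul_of_nonneg_right hvol hc₀, hρpos.le]
  have hcompl : 1/2 ≤ ∫ ξ in Bᶜ, ‖𝓕 u ξ‖^2 := by
    have h := integral_add_compl hBmeas hI2
    rw [hpl] at h; linarith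
  have hρmem : ∀ ξ : RR n, ξ ∈ Bᶜ → ρ ≤ ‖ξ‖ := by
    intro ξ hξ
    rw [hB, Set.mem_compl_iff, mem_ball_zero_iff, not_lt] at hξ
    exact hξ
  have hJs_lb : ρ^(2*s) * (1/2) ≤ ∫ ξ : RR n, ‖ξ‖^(2*s) * ‖𝓕 u ξ‖^2 := by
    have step1 : ρ^(2*s) * (1/2) ≤ ρ^(2*s) * ∫ ξ in Bᶜ, ‖𝓕 u ξ‖^2 :=
      mul_le_mul_of_nonneg_left hcompl (rpow_nonneg hρpos.le _)
    have step2 : ρ^(2*s) * ∫ ξ in Bᶜ, ‖𝓕 u ξ‖^2 = ∫ ξ in Bᶜ, ρ^(2*s) * ‖𝓕 u ξ‖^2 :=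
      (integral_const_mul _ _).symm
    have step3 : ∫ ξ in Bᶜ, ρ^(2*s) * ‖𝓕 u ξ‖^2 ≤ ∫ ξ in Bᶜ, ‖ξ‖^(2*s) * ‖𝓕 u ξ‖^2 := by
      apply setIntegral_mono_on (hI2.const_mul _).integrableOn hIs.integrableOn hBmeas.compl
      intro ξ hξ
      exact mul_le_mul_of_nonneg_right
        (rpow_le_rpow hρpos.le (hρmem ξ hξ) (by positivity)) (sq_nonneg _)
    have step4 : ∫ ξ in Bᶜ, ‖ξ‖^(2*s) * ‖𝓕 u ξ‖^2 ≤ ∫ ξ : RR n, ‖ξ‖^(2*s) * ‖𝓕 u ξ‖^2 :=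
      setIntegral_le_integral hIs (Filter.Eventually.of_forall (fun ξ => by positivity))
    linarith
  have hpartB : ∫ ξ in B, ‖ξ‖^(2*t) * ‖𝓕 u ξ‖^2 ≤ ρ^(2*t) * (1/2) := by
    calc ∫ ξ in B, ‖ξ‖^(2*t) * ‖𝓕 u ξ‖^2 ≤ ∫ ξ in B, ρ^(2*t) * ‖𝓕 u ξ‖^2 := by
          apply setIntegral_mono_on hIt.integrableOn (hI2.const_mul _).integrableOn hBmeas
          intro ξ hξ
          rw [hB, mem_ball_zero_iff] at hξ
          exact mul_le_mul_of_nonneg_right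
            (rpow_le_rpow (norm_nonneg _) hξ.le (by positivity)) (sq_nonneg _)
      _ = ρ^(2*t) * ∫ ξ in B, ‖𝓕 u ξ‖^2 := integral_const_mul _ _
      _ ≤ ρ^(2*t) * (1/2) := mul_le_mul_of_nonneg_left hBhalf (rpow_nonneg hρpos.le _)
  have hpartB' : ρ^(2*t) * (1/2) ≤ ρ^(2*t-2*s) * ∫ ξ : RR n, ‖ξ‖^(2*s) * ‖𝓕 u ξ‖^2 := by
    have hsplitρ : ρ^(2*t) = ρ^(2*t-2*s) * ρ^(2*s) := by
      rw [← rpow_add hρpos]; ring_nf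
    rw [hsplitρ, mul_assoc]
    exact mul_le_mul_of_nonneg_left hJs_lb (rpow_nonneg hρpos.le _)
  have hpartC : ∫ ξ in Bᶜ, ‖ξ‖^(2*t) * ‖𝓕 u ξ‖^2
      ≤ ρ^(2*t-2*s) * ∫ ξ : RR n, ‖ξ‖^(2*s) * ‖𝓕 u ξ‖^2 := by
    have step1 : ∫ ξ in Bᶜ, ‖ξ‖^(2*t) * ‖𝓕 u ξ‖^2
        ≤ ∫ ξ in Bᶜ, ρ^(2*t-2*s) * (‖ξ‖^(2*s) * ‖𝓕 u ξ‖^2) := by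
      apply setIntegral_mono_on hIt.integrableOn (hIs.const_mul _).integrableOn hBmeas.compl
      intro ξ hξ
      have hξpos : 0 < ‖ξ‖ := lt_of_lt_of_le hρpos (hρmem ξ hξ)
      have e1 : ‖ξ‖^(2*t) = ‖ξ‖^(2*t-2*s) * ‖ξ‖^(2*s) := by
        rw [← rpow_add hξpos]; ring_nf
      have e2 : ‖ξ‖^(2*t-2*s) ≤ ρ^(2*t-2*s) :=
        rpow_le_rpow_of_nonpos hρpos (hρmem ξ hξ) (by linarith)
      calc ‖ξ‖^(2*t) * ‖𝓕 u ξ‖^2 = ‖ξ‖^(2*t-2*s) * (‖ξ‖^(2*s) * ‖𝓕 u ξ‖^2) := by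
            rw [e1]; ring
        _ ≤ ρ^(2*t-2*s) * (‖ξ‖^(2*s) * ‖𝓕 u ξ‖^2) :=
            mul_le_mul_of_nonneg_right e2 (by positivity)
    have step2 : ∫ ξ in Bᶜ, ρ^(2*t-2*s) * (‖ξ‖^(2*s) * ‖𝓕 u ξ‖^2)
        = ρ^(2*t-2*s) * ∫ ξ in Bᶜ, ‖ξ‖^(2*s) * ‖𝓕 u ξ‖^2 := integral_const_mul _ _
    have step3 : ∫ ξ in Bᶜ, ‖ξ‖^(2*s) * ‖𝓕 u ξ‖^2 ≤ ∫ ξ : RR n, ‖ξ‖^(2*s) * ‖𝓕 u ξ‖^2 :=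
      setIntegral_le_integral hIs (Filter.Eventually.of_forall (fun ξ => by positivity))
    calc ∫ ξ in Bᶜ, ‖ξ‖^(2*t) * ‖𝓕 u ξ‖^2
        ≤ ρ^(2*t-2*s) * ∫ ξ in Bᶜ, ‖ξ‖^(2*s) * ‖𝓕 u ξ‖^2 := by rw [← step2]; exact step1
      _ ≤ ρ^(2*t-2*s) * ∫ ξ : RR n, ‖ξ‖^(2*s) * ‖𝓕 u ξ‖^2 :=
          mul_le_mul_of_nonneg_left step3 (rpow_nonneg hρpos.le _)
  have hsplit : ∫ ξ : RR n, ‖ξ‖^(2*t) * ‖𝓕 u ξ‖^2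
      = (∫ ξ in B, ‖ξ‖^(2*t) * ‖𝓕 u ξ‖^2) + ∫ ξ in Bᶜ, ‖ξ‖^(2*t) * ‖𝓕 u ξ‖^2 :=
    (integral_add_compl hBmeas hIt).symm
  rw [hsplit]
  have := hpartB.trans hpartB'
  linarith

lemma core (n : ℕ) (hn : 1 ≤ n) (K : Set (RR n)) (hK : IsCompact K)
    (s : ℝ) (hs : 0 < s) (t : ℝ) (ht0 : 0 ≤ t) (hts : t ≤ s) :
    ∃ C > (0:ℝ), ∀ u : RR n → ℂ, ContDiff ℝ (⊤ : ℕ∞) u → HasCompactSupport u → tsupport u ⊆ K →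
      ∫ ξ : RR n, ‖ξ‖ ^ (2*t) * ‖𝓕 u ξ‖ ^ 2
        ≤ C * ∫ ξ : RR n, ‖ξ‖ ^ (2*s) * ‖𝓕 u ξ‖ ^ 2 := by
  obtain ⟨C, hC, hmain⟩ := coreNorm n hn K hK s hs t ht0 hts
  refine ⟨C, hC, ?_⟩
  intro u hu hsupp hsub
  set L : ℝ := ∫ x : RR n, ‖u x‖ ^ 2 with hL
  have hInt2 : Integrable (fun x : RR n => ‖u x‖^2) :=
    ((hu.continuous.norm.pow 2)).integrable_of_hasCompactSupport
      (by have h := hsupp.comp_left (g := fun z : ℂ => ‖z‖^2) (by simp); exact h)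
  have hL0 : 0 ≤ L := integral_nonneg fun x => sq_nonneg _
  rcases eq_or_lt_of_le hL0 with hzero | hpos
  · -- u = 0
    have hae : (fun x : RR n => ‖u x‖^2) =ᵐ[volume] 0 :=
      (integral_eq_zero_iff_of_nonneg (fun x => sq_nonneg _) hInt2).1 hzero.symm
    have heq : (fun x : RR n => ‖u x‖^2) = fun _ => (0:ℝ) :=
      (Continuous.ae_eq_iff_eq (μ := volume) (hu.continuous.norm.pow 2) continuous_const).1 hae
    have hu0 : u = fun _ => 0 := by
      funext x
      have := congrFun heq x
      simpa [pow_eq_zero_iff] using this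
    have hF0 : ∀ ξ : RR n, 𝓕 u ξ = 0 := by
      intro ξ
      rw [hu0, Real.fourier_eq']
      simp
    simp only [hF0]
    simp
  · have hsqrt : 0 < Real.sqrt L := Real.sqrt_pos.2 hpos
    set c : ℝ := (Real.sqrt L)⁻¹ with hc
    have hcpos : 0 < c := inv_pos.2 hsqrt
    set v : RR n → ℂ := fun x => (c : ℂ) * u x with hv
    have hvs : v = (c:ℂ) • u := by funext x; simp [hv, smul_eq_mul]
    have hvc : ContDiff ℝ (⊤ : ℕ∞) v := contDiff_const.mul hu
    have hvsupp : HasCompactSupport v := by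
      rw [hvs]; exact hsupp.smul_left
    have hvsub : tsupport v ⊆ K := by
      have hss : Function.support v ⊆ Function.support u := by
        intro x hx
        simp only [Function.mem_support] at hx ⊢
        intro h0
        apply hx
        rw [hv]
        simp [h0]
      exact (closure_mono hss).trans hsub
    have hnv : ∀ x, ‖v x‖^2 = c^2 * ‖u x‖^2 := by
      intro x
      simp only [hv, norm_mul, Complex.norm_real, Real.norm_eq_abs, abs_of_pos hcpos, mul_pow]
    have hvnorm : (∫ x : RR n, ‖v x‖ ^ 2) = 1 := by
      simp_rw [hnv]
      rw [integral_const_mul, ← hL, hc]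
      rw [inv_pow, Real.sq_sqrt hL0]
      exact inv_mul_cancel₀ (ne_of_gt hpos)
    have hFv : ∀ ξ : RR n, 𝓕 v ξ = (c:ℂ) * 𝓕 u ξ := by
      intro ξ
      rw [hvs]
      rw [show (𝓕 ((c:ℂ) • u)) = (c:ℂ) • 𝓕 u from
        VectorFourier.fourierIntegral_const_smul _ _ _ _ _]
      simp [smul_eq_mul]
    have hwv : ∀ r : ℝ, (∫ ξ : RR n, ‖ξ‖ ^ (2*r) * ‖𝓕 v ξ‖ ^ 2)
        = c^2 * ∫ ξ : RR n, ‖ξ‖ ^ (2*r) * ‖𝓕 u ξ‖ ^ 2 := by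
      intro r
      rw [← integral_const_mul]
      congr 1
      funext ξ
      rw [hFv ξ]
      simp only [norm_mul, Complex.norm_real, Real.norm_eq_abs, abs_of_pos hcpos, mul_pow]
      ring
    have := hmain v hvc hvsupp hvsub hvnorm
    rw [hwv t, hwv s] at this
    have hc2 : 0 < c^2 := by positivity
    calc ∫ ξ : RR n, ‖ξ‖ ^ (2*t) * ‖𝓕 u ξ‖ ^ 2
        = (c^2)⁻¹ * (c^2 * ∫ ξ : RR n, ‖ξ‖ ^ (2*t) * ‖𝓕 u ξ‖ ^ 2) := by
          rw [← mul_assoc, inv_mul_cancel₀ (ne_of_gt hc2), one_mul]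
      _ ≤ (c^2)⁻¹ * (C * (c^2 * ∫ ξ : RR n, ‖ξ‖ ^ (2*s) * ‖𝓕 u ξ‖ ^ 2)) := by
          apply mul_le_mul_of_nonneg_left this (by positivity)
      _ = C * ∫ ξ : RR n, ‖ξ‖ ^ (2*s) * ‖𝓕 u ξ‖ ^ 2 := by
          field_simp

lemma FT_eq (n : ℕ) (u : RR n → ℂ) (ξ : RR n) :
    FT n u ξ = (((2 * Real.pi) ^ (-(n : ℝ) / 2) : ℝ) : ℂ) * 𝓕 u ((2 * Real.pi)⁻¹ • ξ) := by
  rw [FT, Real.fourier_eq']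
  congr 1
  apply integral_congr_ae
  filter_upwards with x
  rw [smul_eq_mul]
  congr 1
  rw [real_inner_smul_right]
  congr 1
  have hπ : (2 * Real.pi) ≠ 0 := by positivity
  have h2π : ((2:ℂ) * (π:ℂ)) ≠ 0 := by
    simp [Complex.ofReal_ne_zero, Real.pi_ne_zero]
  push_cast
  field_simp

lemma FT_integral (n : ℕ) (u : RR n → ℂ) (r : ℝ) :
    ∫ ξ : RR n, ‖ξ‖ ^ r * ‖FT n u ξ‖ ^ 2
      = (2 * Real.pi) ^ r * ∫ ξ : RR n, ‖ξ‖ ^ r * ‖𝓕 u ξ‖ ^ 2 := by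
  have h2π : (0:ℝ) < 2 * Real.pi := by positivity
  set A : ℝ := (2 * Real.pi) ^ (-(n : ℝ) / 2) with hA
  have hA0 : 0 < A := rpow_pos_of_pos h2π _
  set F : RR n → ℝ := fun w => ‖(2 * Real.pi) • w‖ ^ r * ‖𝓕 u w‖ ^ 2 with hF
  have key : ∀ ξ : RR n, ‖ξ‖ ^ r * ‖FT n u ξ‖ ^ 2 = A^2 * F ((2 * Real.pi)⁻¹ • ξ) := by
    intro ξ
    have hsm : (2 * Real.pi) • (2 * Real.pi)⁻¹ • ξ = ξ := by
      rw [smul_smul, mul_inv_cancel₀ (ne_of_gt h2π), one_smul]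
    rw [hF]
    simp only []
    rw [hsm, FT_eq, norm_mul, Complex.norm_real, Real.norm_eq_abs, abs_of_pos hA0, mul_pow]
    ring
  have hFint : ∫ w : RR n, F w = (2 * Real.pi) ^ r * ∫ w : RR n, ‖w‖ ^ r * ‖𝓕 u w‖ ^ 2 := by
    rw [hF]
    simp_rw [norm_smul, Real.norm_eq_abs, abs_of_pos h2π,
      Real.mul_rpow h2π.le (norm_nonneg _), mul_assoc]
    exact integral_const_mul _ _
  have hconst : A^2 * (2 * Real.pi)^(n : ℕ) = 1 := by
    rw [hA, ← Real.rpow_natCast ((2 * Real.pi) ^ (-(n : ℝ) / 2)) 2, ← Real.rpow_mul h2π.le,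
      ← Real.rpow_natCast (2 * Real.pi) n, ← Real.rpow_add h2π]
    norm_num
  calc ∫ ξ : RR n, ‖ξ‖ ^ r * ‖FT n u ξ‖ ^ 2
      = ∫ ξ : RR n, A^2 * F ((2 * Real.pi)⁻¹ • ξ) := by
        exact integral_congr_ae (Filter.Eventually.of_forall key)
    _ = A^2 * ∫ ξ : RR n, F ((2 * Real.pi)⁻¹ • ξ) := integral_const_mul _ _
    _ = A^2 * ((2 * Real.pi)^(n:ℕ) • ∫ w : RR n, F w) := by
        rw [MeasureTheory.Measure.integral_comp_inv_smul_of_nonneg volume F h2π.le,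
          finrank_euclideanSpace_fin]
    _ = (2 * Real.pi) ^ r * ∫ ξ : RR n, ‖ξ‖ ^ r * ‖𝓕 u ξ‖ ^ 2 := by
        rw [hFint, smul_eq_mul, ← mul_assoc, ← mul_assoc, hconst, one_mul]


/-- Higher order fractional Poincaré inequality: for u smooth and compactly supported in a
fixed compact set K, ‖(-Δ)^{t/2}u‖²_{L²} ≤ C ‖(-Δ)^{s/2}u‖²_{L²} for 0 ≤ t ≤ s. -/
theorem higher_order_fractional_poincare
    (n : ℕ) (hn : 1 ≤ n) (K : Set (RR n)) (hK : IsCompact K)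
    (s : ℝ) (hs : 0 < s) (t : ℝ) (ht : t ∈ Set.Icc (0 : ℝ) s) :
    ∃ C > (0 : ℝ), ∀ u : RR n → ℂ, ContDiff ℝ (⊤ : ℕ∞) u → HasCompactSupport u → tsupport u ⊆ K →
      ∫ ξ : RR n, ‖ξ‖ ^ (2 * t) * ‖FT n u ξ‖ ^ 2
        ≤ C * ∫ ξ : RR n, ‖ξ‖ ^ (2 * s) * ‖FT n u ξ‖ ^ 2 := by

  obtain ⟨C, hC, hcore⟩ := core n hn K hK s hs t ht.1 ht.2
  have h2π : (0:ℝ) < 2 * Real.pi := by positivity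
  have hpow_t : (0:ℝ) < (2 * Real.pi) ^ (2 * t) := Real.rpow_pos_of_pos h2π _
  have hpow_s : (0:ℝ) < (2 * Real.pi) ^ (2 * s) := Real.rpow_pos_of_pos h2π _
  refine ⟨C * (2 * Real.pi) ^ (2 * t) * ((2 * Real.pi) ^ (2 * s))⁻¹,
    mul_pos (mul_pos hC hpow_t) (inv_pos.2 hpow_s), ?_⟩
  intro u hu hsupp hsub
  rw [FT_integral n u (2 * t), FT_integral n u (2 * s)]
  have hmain := hcore u hu hsupp hsub
  calc (2 * Real.pi) ^ (2 * t) * ∫ ξ : RR n, ‖ξ‖ ^ (2 * t) * ‖𝓕 u ξ‖ ^ 2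
      ≤ (2 * Real.pi) ^ (2 * t) * (C * ∫ ξ : RR n, ‖ξ‖ ^ (2 * s) * ‖𝓕 u ξ‖ ^ 2) :=
        mul_le_mul_of_nonneg_left hmain hpow_t.le
    _ = C * (2 * Real.pi) ^ (2 * t) * ((2 * Real.pi) ^ (2 * s))⁻¹ *
        ((2 * Real.pi) ^ (2 * s) * ∫ ξ : RR n, ‖ξ‖ ^ (2 * s) * ‖𝓕 u ξ‖ ^ 2) := by
        field_simp
end
end
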